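/- For a star connection T on N vertices built from r stars (each with at least 3 vertices), the independence number of T equals N − r. -/

import Mathlib

/-- An independent set of vertices: pairwise non-adjacent. -/
def IndepSet {V : Type*} (G : SimpleGraph V) (s : Set V) : Prop :=
  s.Pairwise fun u v => ¬ G.Adj u v

/-- The independence number of a graph: the maximum cardinality of an independent set. -/
noncomputable def indepNum {V : Type*} [Fintype V] (G : SimpleGraph V) : ℕ :=
  sSup {k | ∃ s : Set V, IndepSet G s ∧ s.ncard = k}

/-- A leaf is a vertex of degree 1. -/
def IsLeaf {V : Type*} (G : SimpleGraph V) (v : V) : Prop :=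
  (G.neighborSet v).ncard = 1
/-!
Every edge of `T` contains a centre, so the non-centres form an independent set of size `N - r`.
Conversely, root the tree at any vertex: each centre has at least two neighbours, hence a child,
and distinct centres have distinct children since every vertex has at most one parent. The `r`
edges from the centres to these children are pairwise disjoint, and an independent set misses
an endpoint of each of them.
-/

namespace SimpleGraph

variable {V : Type*} {G : SimpleGraph V}

theorem IsAcyclic.eq_penultimate_of_dist_eq_add_one (hG : G.IsAcyclic) {u v w : V}
    {q : G.Walk u w} (hq : q.IsPath) (hadj : G.Adj v w) (hd : G.dist u w = G.dist u v + 1) :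
    v = q.penultimate := by
  classical
  obtain ⟨p, hp, hlen⟩ := (q.reachable.trans hadj.symm.reachable).exists_path_of_dist
  -- Otherwise `w` would lie on a shortest path from `u` to `v`, although it is farther from `u`.
  have hv : v ∈ q.support := by
    by_contra hv
    have hw := hG.mem_support_of_ne_mem_support_of_adj_of_isPath hp hq hadj hv
    have := G.dist_le (p.takeUntil w hw)
    have := p.length_takeUntil_le_length hw
    omega
  exact hG.eq_penultimate_of_adj_end hq hadj.symm hv

theorem IsTree.exists_adj_dist_eq_add_one (hG : G.IsTree) (u : V) {v : V}
    (hv : (G.neighborSet v).Nontrivial) : ∃ w, G.Adj v w ∧ G.dist u w = G.dist u v + 1 := by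
  obtain ⟨a, ha, b, hb, hab⟩ := hv
  obtain ⟨q, hq, -⟩ := hG.existsUnique_path u v
  rcases hG.dist_eq_dist_add_one_of_adj u ha with h | h
  · rcases hG.dist_eq_dist_add_one_of_adj u hb with h' | h'
    · exact absurd ((hG.isAcyclic.eq_penultimate_of_dist_eq_add_one hq ha.symm h).trans
        (hG.isAcyclic.eq_penultimate_of_dist_eq_add_one hq hb.symm h').symm) hab
    · exact ⟨b, hb, h'⟩
  · exact ⟨a, ha, h⟩

theorem IsTree.exists_injective_adj {ι : Type*} (hG : G.IsTree) {c : ι → V}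
    (hc : Function.Injective c) (hdeg : ∀ i, (G.neighborSet (c i)).Nontrivial) :
    ∃ g : ι → V, Function.Injective g ∧ ∀ i, G.Adj (c i) (g i) := by
  obtain ⟨u⟩ := hG.connected.nonempty
  choose g hadj hdist using fun i ↦ hG.exists_adj_dist_eq_add_one u (hdeg i)
  refine ⟨g, fun i j hij ↦ hc ?_, hadj⟩
  obtain ⟨q, hq, -⟩ := hG.existsUnique_path u (g j)
  rw [hG.isAcyclic.eq_penultimate_of_dist_eq_add_one hq (hadj j) (hdist j)]
  exact hG.isAcyclic.eq_penultimate_of_dist_eq_add_one hq (hij ▸ hadj i) (hij ▸ hdist i)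

end SimpleGraph

theorem IndepSet.ncard_add_card_le {V ι : Type*} [Finite V] {G : SimpleGraph V} {s : Set V}
    (hs : IndepSet G s) {c g : ι → V} (hc : Function.Injective c) (hg : Function.Injective g)
    (hC : IndepSet G (Set.range c)) (hadj : ∀ i, G.Adj (c i) (g i)) :
    s.ncard + Nat.card ι ≤ Nat.card V := by
  classical
  have hgc : ∀ i j, g i ≠ c j := fun i j h ↦
    hC ⟨i, rfl⟩ ⟨j, rfl⟩ (h ▸ (hadj i).ne) (h ▸ hadj i)
  -- Each edge `c i — g i` has an endpoint outside `s`, and these edges are pairwise disjoint.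
  let f : ι → ↥sᶜ := fun i ↦ if h : c i ∈ s then ⟨g i, fun hgs ↦ hs h hgs (hadj i).ne (hadj i)⟩
    else ⟨c i, h⟩
  have hf : Function.Injective f := by
    intro i j hij
    simp only [f] at hij
    split_ifs at hij with hi hj hj <;> simp only [Subtype.mk.injEq] at hij
    exacts [hg hij, absurd hij (hgc i j), absurd hij.symm (hgc j i), hc hij]
  have := Nat.card_le_card_of_injective f hf
  rw [Nat.card_coe_set_eq] at this
  have := Set.ncard_add_ncard_compl s
  omega

theorem indepNum_eq_ncard {V : Type*} [Fintype V] {G : SimpleGraph V} {s : Set V}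
    (hs : IndepSet G s) (hmax : ∀ t, IndepSet G t → t.ncard ≤ s.ncard) :
    indepNum G = s.ncard :=
  IsGreatest.csSup_eq ⟨⟨s, hs, rfl⟩, by rintro _ ⟨t, ht, rfl⟩; exact hmax t ht⟩

section StarUnion

variable {V ι : Type*} {T : SimpleGraph V} {c : ι → V} {S : ι → Set V}

/-- `T` is the union of the stars with centres `c i` and vertex sets `S i`. -/
def IsStarUnion (T : SimpleGraph V) (c : ι → V) (S : ι → Set V) : Prop :=
  ∀ u v, T.Adj u v ↔ ∃ i, u ≠ v ∧ ((u = c i ∧ v ∈ S i) ∨ (v = c i ∧ u ∈ S i))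

theorem IsStarUnion.indepSet_compl_range (hT : IsStarUnion T c S) :
    IndepSet T (Set.range c)ᶜ := by
  intro u hu v hv _ huv
  obtain ⟨i, -, ⟨rfl, -⟩ | ⟨rfl, -⟩⟩ := (hT u v).1 huv
  exacts [hu ⟨i, rfl⟩, hv ⟨i, rfl⟩]

theorem IsStarUnion.indepSet_range (hT : IsStarUnion T c S)
    (hcenter : ∀ i j, c i ∈ S j → j = i) :
    IndepSet T (Set.range c) := by
  rintro _ ⟨i, rfl⟩ _ ⟨j, rfl⟩ hne hij
  obtain ⟨k, -, ⟨hik, hj⟩ | ⟨hjk, hi⟩⟩ := (hT _ _).1 hij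
  · exact hne (hik.trans (congrArg c (hcenter j k hj)))
  · exact hne (congrArg c (hcenter i k hi) ▸ hjk).symm

theorem IsStarUnion.neighborSet_nontrivial (hT : IsStarUnion T c S) {i : ι}
    (hS : 3 ≤ (S i).ncard) : (T.neighborSet (c i)).Nontrivial := by
  have hsub : S i \ {c i} ⊆ T.neighborSet (c i) := fun v hv ↦
    (hT _ _).2 ⟨i, Ne.symm hv.2, Or.inl ⟨rfl, hv.1⟩⟩
  have := Set.pred_ncard_le_ncard_sdiff_singleton (S i) (c i)
  exact (Set.one_lt_ncard_iff_nontrivial_and_finite.1 (by omega)).1.mono hsub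

end StarUnion

theorem starConnection_indepNum_card_sub_general {V : Type*} [Fintype V]
    (T : SimpleGraph V) (r : ℕ) (n : Fin r → ℕ) (c : Fin r → V) (S : Fin r → Set V)
    (hn : ∀ i, 3 ≤ n i)
    (hScard : ∀ i, (S i).ncard = n i)
    (hcmem : ∀ i, c i ∈ S i)
    (hAdj : ∀ u v, T.Adj u v ↔ ∃ i, u ≠ v ∧ ((u = c i ∧ v ∈ S i) ∨ (v = c i ∧ u ∈ S i)))
    (hcenter : ∀ i j, c i ∈ S j → j = i)
    (htree : T.IsTree) :
    indepNum T = Fintype.card V - r := by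
  have hT : IsStarUnion T c S := hAdj
  have hc : Function.Injective c := fun i j h ↦ (hcenter i j (h ▸ hcmem j)).symm
  obtain ⟨g, hg, hadj⟩ :=
    htree.exists_injective_adj hc fun i ↦ hT.neighborSet_nontrivial (hScard i ▸ hn i)
  have hcard : (Set.range c)ᶜ.ncard = Fintype.card V - r := by
    rw [Set.ncard_compl, Set.ncard_range_of_injective hc, Nat.card_eq_fintype_card,
      Nat.card_eq_fintype_card, Fintype.card_fin]
  rw [← hcard]
  refine indepNum_eq_ncard hT.indepSet_compl_range fun s hs ↦ ?_
  have := hs.ncard_add_card_le hc hg (hT.indepSet_range hcenter) hadj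
  rw [Nat.card_eq_fintype_card, Nat.card_eq_fintype_card, Fintype.card_fin] at this
  omega

/-- For a star connection `T` on `N` vertices built from `r` stars (each with at least 3
vertices), the independence number of `T` equals `N - r`. -/
theorem starConnection_indepNum_card_sub {V : Type*} [Fintype V]
    (T : SimpleGraph V) (r : ℕ) (n : Fin r → ℕ) (c : Fin r → V) (S : Fin r → Set V)
    (hr : 2 ≤ r) (hn : ∀ i, 3 ≤ n i)
    (hScard : ∀ i, (S i).ncard = n i)
    (hcmem : ∀ i, c i ∈ S i)
    (hcover : ∀ v, ∃ i, v ∈ S i)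
    (hAdj : ∀ u v, T.Adj u v ↔ ∃ i, u ≠ v ∧ ((u = c i ∧ v ∈ S i) ∨ (v = c i ∧ u ∈ S i)))
    (hinter : ∀ i j, i ≠ j → (S i ∩ S j).Subsingleton)
    (hcenter : ∀ i j, c i ∈ S j → j = i)
    (htree : T.IsTree) :
    indepNum T = Fintype.card V - r :=
  starConnection_indepNum_card_sub_general T r n c S hn hScard hcmem hAdj hcenter htree
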